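/- arXiv:1905.12732 — 2 statements merged into one kernel-verified Lean document; each statement's English description precedes it below -/
import Mathlib

section
/- Let F be a proper convex function on ℝ^{d×d}_sym with recession function F_∞ and let Λ = Dom(F_∞). Then the condition 'there exists r > 0 with Dom(F*) ⊆ Λ⁰ + B(0,r)' (where Λ⁰ is the polar of Λ) is equivalent to 'F_∞(D) ≤ r|D| for all D ∈ Dom(F_∞)'. -/
open Pointwise

/-- Frobenius inner product on `d × d` real matrices. -/
def frobDot {d : ℕ} (A B : Matrix (Fin d) (Fin d) ℝ) : ℝ := ∑ i, ∑ j, A i j * B i j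

/-- Frobenius norm. -/
noncomputable def frobNorm {d : ℕ} (A : Matrix (Fin d) (Fin d) ℝ) : ℝ :=
  Real.sqrt (frobDot A A)

/-- Legendre–Fenchel conjugate (`EReal`-valued). -/
noncomputable def fenchelConj {d : ℕ} (F : Matrix (Fin d) (Fin d) ℝ → ℝ)
    (S : Matrix (Fin d) (Fin d) ℝ) : EReal :=
  ⨆ D : Matrix (Fin d) (Fin d) ℝ, ((frobDot S D - F D : ℝ) : EReal)

/-- Recession function of `F` (`EReal`-valued). -/
noncomputable def recessFn {d : ℕ} (F : Matrix (Fin d) (Fin d) ℝ → ℝ)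
    (E : Matrix (Fin d) (Fin d) ℝ) : EReal :=
  ⨆ s : ℝ, ⨆ _ : 0 < s, (((F (s • E) - F 0) / s : ℝ) : EReal)

/-! ### Auxiliary setup -/

section Aux

variable {d : ℕ}

abbrev ESp (d : ℕ) := EuclideanSpace ℝ (Fin d × Fin d)

noncomputable def mEquiv (d : ℕ) : Matrix (Fin d) (Fin d) ℝ ≃ₗ[ℝ] ESp d where
  toFun A := WithLp.toLp 2 (fun p : Fin d × Fin d => A p.1 p.2)
  invFun x := fun i j => x (i, j)
  map_add' _ _ := rfl
  map_smul' _ _ := rfl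
  left_inv _ := rfl
  right_inv _ := rfl

lemma frobDot_eq_inner (A B : Matrix (Fin d) (Fin d) ℝ) :
    frobDot A B = inner ℝ (mEquiv d A) (mEquiv d B) := by
  simp [frobDot, PiLp.inner_apply, RCLike.inner_apply, mEquiv, Fintype.sum_prod_type]
  exact Finset.sum_congr rfl fun i _ => Finset.sum_congr rfl fun j _ => mul_comm _ _

lemma frobNorm_eq_norm (A : Matrix (Fin d) (Fin d) ℝ) :
    frobNorm A = ‖mEquiv d A‖ := by
  rw [frobNorm, frobDot_eq_inner, real_inner_self_eq_norm_sq, Real.sqrt_sq (norm_nonneg _)]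

lemma frobNorm_nonneg (A : Matrix (Fin d) (Fin d) ℝ) : 0 ≤ frobNorm A :=
  Real.sqrt_nonneg _

lemma frobDot_add_left (A B C : Matrix (Fin d) (Fin d) ℝ) :
    frobDot (A + B) C = frobDot A C + frobDot B C := by
  simp [frobDot_eq_inner, map_add, inner_add_left]

lemma frobDot_smul_right (s : ℝ) (A B : Matrix (Fin d) (Fin d) ℝ) :
    frobDot A (s • B) = s * frobDot A B := by
  rw [frobDot_eq_inner, frobDot_eq_inner, map_smul]
  exact real_inner_smul_right _ _ _

lemma frobDot_sub_right (A B C : Matrix (Fin d) (Fin d) ℝ) :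
    frobDot A (B - C) = frobDot A B - frobDot A C := by
  simp [frobDot_eq_inner, map_sub, inner_sub_right]

lemma frobDot_le_norms (A B : Matrix (Fin d) (Fin d) ℝ) :
    frobDot A B ≤ frobNorm A * frobNorm B := by
  rw [frobDot_eq_inner, frobNorm_eq_norm, frobNorm_eq_norm]
  exact real_inner_le_norm _ _

/-- The difference quotient. -/
noncomputable def qF (F : Matrix (Fin d) (Fin d) ℝ → ℝ) (D : Matrix (Fin d) (Fin d) ℝ)
    (s : ℝ) : ℝ := (F (s • D) - F 0) / s

lemma recessFn_eq (F : Matrix (Fin d) (Fin d) ℝ → ℝ) (D : Matrix (Fin d) (Fin d) ℝ) :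
    recessFn F D = ⨆ s : ℝ, ⨆ _ : 0 < s, ((qF F D s : ℝ) : EReal) := rfl

lemma qF_le_recessFn (F : Matrix (Fin d) (Fin d) ℝ → ℝ) (D : Matrix (Fin d) (Fin d) ℝ)
    {s : ℝ} (hs : 0 < s) : ((qF F D s : ℝ) : EReal) ≤ recessFn F D := by
  rw [recessFn_eq]
  exact le_iSup₂ (f := fun (s : ℝ) (_ : 0 < s) => ((qF F D s : ℝ) : EReal)) s hs

lemma recessFn_le_coe (F : Matrix (Fin d) (Fin d) ℝ → ℝ) (D : Matrix (Fin d) (Fin d) ℝ)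
    {c : ℝ} (h : ∀ s : ℝ, 0 < s → qF F D s ≤ c) : recessFn F D ≤ (c : EReal) := by
  rw [recessFn_eq]
  exact iSup_le fun s => iSup_le fun hs => by exact_mod_cast h s hs

lemma exists_qF_bound {F : Matrix (Fin d) (Fin d) ℝ → ℝ} {D : Matrix (Fin d) (Fin d) ℝ}
    (h : recessFn F D < ⊤) : ∃ M : ℝ, ∀ s : ℝ, 0 < s → qF F D s ≤ M := by
  have hbot : ((qF F D 1 : ℝ) : EReal) ≤ recessFn F D := qF_le_recessFn F D one_pos
  have hne : recessFn F D ≠ ⊥ := fun hb => by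
    rw [hb] at hbot; exact absurd hbot (by simp)
  refine ⟨(recessFn F D).toReal, fun s hs => ?_⟩
  have h1 : ((qF F D s : ℝ) : EReal) ≤ recessFn F D := qF_le_recessFn F D hs
  rw [← EReal.coe_toReal h.ne hne] at h1
  exact_mod_cast h1

end Aux
section Lam

variable {d : ℕ} {F : Matrix (Fin d) (Fin d) ℝ → ℝ}

lemma lam_smul (hconv : ConvexOn ℝ Set.univ F) {D : Matrix (Fin d) (Fin d) ℝ}
    (hD : recessFn F D < ⊤) {t : ℝ} (ht : 0 < t) : recessFn F (t • D) < ⊤ := by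
  obtain ⟨M, hM⟩ := exists_qF_bound hD
  have : recessFn F (t • D) ≤ ((t * M : ℝ) : EReal) := by
    apply recessFn_le_coe
    intro s hs
    have key : qF F (t • D) s = t * qF F D (s * t) := by
      rw [qF, qF, smul_smul]
      field_simp
    rw [key]
    exact mul_le_mul_of_nonneg_left (hM _ (mul_pos hs ht)) ht.le
  exact lt_of_le_of_lt this (EReal.coe_lt_top _)

lemma lam_add (hconv : ConvexOn ℝ Set.univ F) {D D' : Matrix (Fin d) (Fin d) ℝ}
    (hD : recessFn F D < ⊤) (hD' : recessFn F D' < ⊤) : recessFn F (D + D') < ⊤ := by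
  obtain ⟨M, hM⟩ := exists_qF_bound hD
  obtain ⟨M', hM'⟩ := exists_qF_bound hD'
  have : recessFn F (D + D') ≤ ((M + M' : ℝ) : EReal) := by
    apply recessFn_le_coe
    intro s hs
    have hsum : qF F (D + D') s ≤ qF F D (2 * s) + qF F D' (2 * s) := by
      have hc := hconv.2 (Set.mem_univ ((2 * s) • D)) (Set.mem_univ ((2 * s) • D'))
        (le_of_lt (by norm_num : (0:ℝ) < 1/2)) (le_of_lt (by norm_num : (0:ℝ) < 1/2))
        (by norm_num : (1:ℝ)/2 + 1/2 = 1)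
      have heq : (1/2 : ℝ) • ((2 * s) • D) + (1/2 : ℝ) • ((2 * s) • D') = s • (D + D') := by
        rw [smul_smul, smul_smul, smul_add]
        have h12 : (1/2 : ℝ) * (2 * s) = s := by ring
        rw [h12]
      rw [heq] at hc
      simp only [smul_eq_mul] at hc
      rw [qF, qF, qF]
      rw [← add_div, div_le_div_iff₀ hs (by linarith)]
      have h2s : (0:ℝ) < 2 * s := by linarith
      nlinarith [mul_le_mul_of_nonneg_left hc (le_of_lt hs)]
    calc qF F (D + D') s ≤ qF F D (2 * s) + qF F D' (2 * s) := hsum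
      _ ≤ M + M' := add_le_add (hM _ (by linarith)) (hM' _ (by linarith))
  exact lt_of_le_of_lt this (EReal.coe_lt_top _)

lemma exists_conj_bound {S : Matrix (Fin d) (Fin d) ℝ} (hS : fenchelConj F S < ⊤) :
    ∃ c : ℝ, ∀ y : Matrix (Fin d) (Fin d) ℝ, frobDot S y - F y ≤ c := by
  have hbot : ((frobDot S 0 - F 0 : ℝ) : EReal) ≤ fenchelConj F S :=
    le_iSup (fun D => ((frobDot S D - F D : ℝ) : EReal)) 0
  have hne : fenchelConj F S ≠ ⊥ := fun hb => by
    rw [hb] at hbot; exact (EReal.bot_lt_coe _).not_ge hbot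
  refine ⟨(fenchelConj F S).toReal, fun y => ?_⟩
  have h1 : ((frobDot S y - F y : ℝ) : EReal) ≤ fenchelConj F S :=
    le_iSup (fun D => ((frobDot S D - F D : ℝ) : EReal)) y
  rw [← EReal.coe_toReal hS.ne hne] at h1
  exact_mod_cast h1

lemma conj_lt_top {S : Matrix (Fin d) (Fin d) ℝ} {c : ℝ}
    (h : ∀ y : Matrix (Fin d) (Fin d) ℝ, frobDot S y - F y ≤ c) : fenchelConj F S < ⊤ := by
  have : fenchelConj F S ≤ (c : EReal) := iSup_le fun y => by exact_mod_cast h y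
  exact lt_of_le_of_lt this (EReal.coe_lt_top _)

/-- For `S` in the domain of the conjugate, `⟪S,D⟫ ≤ r‖D‖` for `D ∈ Λ`
(under the hypothesis of the backward direction). -/
lemma inner_le_of_conj_dom {S D : Matrix (Fin d) (Fin d) ℝ} {r : ℝ}
    (hS : fenchelConj F S < ⊤) (hD : recessFn F D < ⊤)
    (hb : recessFn F D ≤ ((r * frobNorm D : ℝ) : EReal)) :
    frobDot S D ≤ r * frobNorm D := by
  obtain ⟨c, hc⟩ := exists_conj_bound hS
  have hq : ∀ s : ℝ, 0 < s → qF F D s ≤ r * frobNorm D := by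
    intro s hs
    have h1 : ((qF F D s : ℝ) : EReal) ≤ ((r * frobNorm D : ℝ) : EReal) :=
      le_trans (qF_le_recessFn F D hs) hb
    exact_mod_cast h1
  refine le_of_forall_pos_le_add fun ε hε => ?_
  set s : ℝ := (|F 0 + c| + 1) / ε with hsdef
  have hs : 0 < s := div_pos (by positivity) hε
  have h2 : frobDot S (s • D) - F (s • D) ≤ c := hc _
  rw [frobDot_smul_right] at h2
  have h3 : qF F D s ≤ r * frobNorm D := hq s hs
  rw [qF, div_le_iff₀ hs] at h3
  -- s * frobDot S D ≤ F (s•D) + c ≤ F 0 + r * frobNorm D * s + c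
  have h4 : s * frobDot S D ≤ F 0 + r * frobNorm D * s + c := by linarith
  have h5 : frobDot S D ≤ (F 0 + r * frobNorm D * s + c) / s := by
    rw [le_div_iff₀ hs]
    linarith
  have h5' : (F 0 + r * frobNorm D * s + c) / s = r * frobNorm D + (F 0 + c) / s := by
    field_simp
    ring
  have h6 : (F 0 + c) / s ≤ ε := by
    rw [hsdef, div_div_eq_mul_div, div_le_iff₀ (by positivity : (0:ℝ) < |F 0 + c| + 1)]
    have : F 0 + c ≤ |F 0 + c| := le_abs_self _
    nlinarith [hε, abs_nonneg (F 0 + c)]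
  linarith

end Lam
section Subgrad

open scoped InnerProductSpace

/-- Existence of a subgradient for a finite convex function on a
finite-dimensional real inner product space. -/
lemma exists_subgradient {E : Type*} [NormedAddCommGroup E] [InnerProductSpace ℝ E]
    [FiniteDimensional ℝ E] (G : E → ℝ) (hG : ConvexOn ℝ Set.univ G) (x₀ : E) :
    ∃ v : E, ∀ y : E, G x₀ + ⟪v, y - x₀⟫_ℝ ≤ G y := by
  have hcont : Continuous G := by
    rw [← continuousOn_univ]
    simpa using hG.continuousOn isOpen_univ
  set s : Set (E × ℝ) := {p : E × ℝ | G p.1 < p.2} with hsdef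
  have hsopen : IsOpen s := by
    have : s = (fun p : E × ℝ => p.2 - G p.1) ⁻¹' Set.Ioi 0 := by
      ext p; simp [hsdef, sub_pos]
    rw [this]
    exact IsOpen.preimage (by fun_prop) isOpen_Ioi
  have hsconv : Convex ℝ s := by
    rintro ⟨p1, p2⟩ hp ⟨q1, q2⟩ hq a b ha hb hab
    have hp' : G p1 < p2 := hp
    have hq' : G q1 < q2 := hq
    show G (a • p1 + b • q1) < a • p2 + b • q2
    simp only [smul_eq_mul]
    have h1 : G (a • p1 + b • q1) ≤ a * G p1 + b * G q1 := by
      simpa [smul_eq_mul] using hG.2 (Set.mem_univ p1) (Set.mem_univ q1) ha hb hab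
    rcases eq_or_lt_of_le ha with rfl0 | ha'
    · have hb1 : b = 1 := by linarith
      rw [← rfl0, hb1] at h1 ⊢
      simpa using lt_of_le_of_lt (by simpa using h1) hq'
    · nlinarith [mul_le_mul_of_nonneg_left hq'.le hb, (mul_lt_mul_iff_right₀ ha').2 hp']
  have hx₀ : (x₀, G x₀) ∉ s := by
    show ¬ G x₀ < G x₀
    exact lt_irrefl _
  obtain ⟨f, hf⟩ := geometric_hahn_banach_open_point hsconv hsopen hx₀
  set α : ℝ := f (0, 1) with hα
  set g : E → ℝ := fun y => f (y, 0) with hg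
  have hdecomp : ∀ (y : E) (t : ℝ), f (y, t) = g y + t * α := by
    intro y t
    have : (y, t) = (y, 0) + t • ((0 : E), (1 : ℝ)) := by
      simp [Prod.ext_iff]
    rw [this, map_add, map_smul, smul_eq_mul]
  have hαneg : α < 0 := by
    have h1 := hf (x₀, G x₀ + 1) (by show G x₀ < G x₀ + 1; linarith)
    rw [hdecomp x₀ (G x₀ + 1), hdecomp x₀ (G x₀)] at h1
    nlinarith
  have hkey : ∀ y : E, g y + G y * α ≤ g x₀ + G x₀ * α := by
    intro y
    refine le_of_forall_pos_le_add fun δ hδ => ?_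
    have hmem : (y, G y + δ / (-α)) ∈ s := by
      show G y < G y + δ / (-α)
      have : 0 < δ / (-α) := div_pos hδ (by linarith)
      linarith
    have h1 := hf _ hmem
    rw [hdecomp y (G y + δ / (-α)), hdecomp x₀ (G x₀)] at h1
    have hαne : α ≠ 0 := ne_of_lt hαneg
    have hexpand : (G y + δ / (-α)) * α = G y * α - δ := by
      have hdd : δ / (-α) * α = -δ := by
        rw [div_mul_eq_mul_div, mul_div_assoc, div_neg, div_self hαne]
        ring
      rw [add_mul, hdd]
      ring
    nlinarith [h1, hexpand]
  -- the representing vector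
  set L : E →L[ℝ] ℝ := (-α)⁻¹ • (f.comp (ContinuousLinearMap.inl ℝ E ℝ)) with hL
  have hLapp : ∀ y : E, L y = (-α)⁻¹ * g y := fun y => rfl
  refine ⟨(InnerProductSpace.toDual ℝ E).symm L, fun y => ?_⟩
  rw [InnerProductSpace.toDual_symm_apply]
  have hLy : L (y - x₀) = (-α)⁻¹ * (g y - g x₀) := by
    rw [map_sub, hLapp, hLapp]
    ring
  rw [hLy]
  have hβ : (0:ℝ) < -α := by linarith
  have h2 : g y - g x₀ ≤ (-α) * (G y - G x₀) := by nlinarith [hkey y]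
  have h3 : (-α)⁻¹ * (g y - g x₀) ≤ G y - G x₀ := by
    rw [inv_mul_le_iff₀ hβ]
    exact h2
  linarith

/-- Subgradient in the matrix setting. -/
lemma exists_subgradient_matrix {d : ℕ} (F : Matrix (Fin d) (Fin d) ℝ → ℝ)
    (hconv : ConvexOn ℝ Set.univ F) (x₀ : Matrix (Fin d) (Fin d) ℝ) :
    ∃ S : Matrix (Fin d) (Fin d) ℝ, ∀ y : Matrix (Fin d) (Fin d) ℝ,
      F x₀ + frobDot S (y - x₀) ≤ F y := by
  set e := mEquiv d with he
  set G : ESp d → ℝ := fun x => F (e.symm x) with hG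
  have hGconv : ConvexOn ℝ Set.univ G := by
    have := hconv.comp_linearMap (e.symm : ESp d →ₗ[ℝ] Matrix (Fin d) (Fin d) ℝ)
    have h' : ConvexOn ℝ Set.univ (F ∘ e.symm) := by simpa [Set.preimage_univ] using this
    exact h'
  obtain ⟨v, hv⟩ := exists_subgradient G hGconv (e x₀)
  refine ⟨e.symm v, fun y => ?_⟩
  have h1 := hv (e y)
  have h2 : G (e y) = F y := by simp [hG]
  have h3 : G (e x₀) = F x₀ := by simp [hG]
  have h4 : ⟪v, e y - e x₀⟫_ℝ = frobDot (e.symm v) (y - x₀) := by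
    rw [frobDot_eq_inner, map_sub]
    simp [he]
  rw [h2, h3, h4] at h1
  exact h1

end Subgrad
section ConeDecomp

open scoped InnerProductSpace

lemma cone_decomp {E : Type*} [NormedAddCommGroup E] [InnerProductSpace ℝ E] [CompleteSpace E]
    (K₀ : Set E) (h0 : (0:E) ∈ K₀)
    (hadd : ∀ {z w : E}, z ∈ K₀ → w ∈ K₀ → z + w ∈ K₀)
    (hsmul : ∀ {t : ℝ}, 0 < t → ∀ {z : E}, z ∈ K₀ → t • z ∈ K₀)
    {x : E} {r : ℝ} (hr : 0 ≤ r) (hx : ∀ z ∈ K₀, ⟪x, z⟫_ℝ ≤ r * ‖z‖) :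
    ∃ p b : E, x = p + b ∧ (∀ z ∈ K₀, ⟪p, z⟫_ℝ ≤ 0) ∧ ‖b‖ ≤ r := by
  set C : Set E := {y | ∀ z ∈ K₀, ⟪y, z⟫_ℝ ≤ 0} with hC
  have h0C : (0:E) ∈ C := fun z _ => by simp
  have hCconv : Convex ℝ C := by
    intro y hy y' hy' a b ha hb hab
    intro z hz
    have h1 := hy z hz
    have h2 := hy' z hz
    rw [inner_add_left, real_inner_smul_left, real_inner_smul_left]
    nlinarith [mul_le_mul_of_nonneg_left h1 ha, mul_le_mul_of_nonneg_left h2 hb]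
  have hCclosed : IsClosed C := by
    have : C = ⋂ z ∈ K₀, {y : E | ⟪y, z⟫_ℝ ≤ 0} := by
      ext y; simp [hC]
    rw [this]
    exact isClosed_biInter fun z _ =>
      isClosed_le (Continuous.inner continuous_id continuous_const) continuous_const
  have hCadd : ∀ {y y' : E}, y ∈ C → y' ∈ C → y + y' ∈ C := by
    intro y y' hy hy' z hz
    rw [inner_add_left]
    exact add_nonpos (hy z hz) (hy' z hz)
  obtain ⟨p, hpC, hinf⟩ :=
    exists_norm_eq_iInf_of_complete_convex ⟨0, h0C⟩ hCclosed.isComplete hCconv x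
  have char := (norm_eq_iInf_iff_real_inner_le_zero hCconv hpC).1 hinf
  set b : E := x - p with hb
  have hbp0 : ⟪b, p⟫_ℝ = 0 := by
    have h1 := char 0 h0C
    rw [zero_sub, inner_neg_right] at h1
    have h2 := char (p + p) (hCadd hpC hpC)
    rw [add_sub_cancel_right] at h2
    linarith
  have hbC : ∀ w ∈ C, ⟪b, w⟫_ℝ ≤ 0 := by
    intro w hw
    have := char (w + p) (hCadd hw hpC)
    rwa [add_sub_cancel_right] at this
  -- the closed convex cone generated by K₀
  set Kc : ConvexCone ℝ E :=
    { carrier := closure K₀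
      smul_mem' := fun c hc z hz =>
        map_mem_closure (continuous_const_smul c) hz fun w hw => hsmul hc hw
      add_mem' := fun z hz w hw =>
        map_mem_closure₂ continuous_add hz hw fun a ha b hb => hadd ha hb } with hKc
  have hKcSet : (Kc : Set E) = closure K₀ := rfl
  have hbipolar : ∀ y : E, (∀ u : E, (∀ z ∈ closure K₀, 0 ≤ ⟪z, u⟫_ℝ) → 0 ≤ ⟪u, y⟫_ℝ) →
      y ∈ closure K₀ := by
    intro y hy
    by_contra hyn
    obtain ⟨f, u, hfa, hfy⟩ := geometric_hahn_banach_closed_point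
      (by rw [← hKcSet]; exact Kc.convex) isClosed_closure hyn
    have hu0 : 0 < u := by simpa using hfa 0 (subset_closure h0)
    have hfle : ∀ a ∈ closure K₀, f a ≤ 0 := by
      intro a ha
      by_contra hpos
      push_neg at hpos
      have ht : 0 < u / f a + 1 := by positivity
      have h1 := hfa ((u / f a + 1) • a) (Kc.smul_mem ht ha)
      rw [map_smul, smul_eq_mul] at h1
      have h2 : (u / f a + 1) * f a = u + f a := by
        rw [add_mul, div_mul_cancel₀ _ hpos.ne', one_mul]
      linarith
    have h3 := hy (-(InnerProductSpace.toDual ℝ E).symm f) (fun z hz => by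
      rw [inner_neg_right, real_inner_comm, InnerProductSpace.toDual_symm_apply]
      linarith [hfle z hz])
    rw [inner_neg_left, InnerProductSpace.toDual_symm_apply] at h3
    linarith
  have hbK : b ∈ closure K₀ := by
    refine hbipolar b ?_
    intro u hu
    have hu' : ∀ z ∈ K₀, 0 ≤ ⟪z, u⟫_ℝ := fun z hz => hu z (subset_closure hz)
    have hminus : -u ∈ C := by
      intro z hz
      rw [inner_neg_left, real_inner_comm]
      linarith [hu' z hz]
    have := hbC (-u) hminus
    rw [inner_neg_right] at this
    rw [real_inner_comm]
    linarith
  have hxcl : ∀ z ∈ closure K₀, ⟪x, z⟫_ℝ ≤ r * ‖z‖ := by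
    intro z hz
    have hsub : closure K₀ ⊆ {z : E | ⟪x, z⟫_ℝ ≤ r * ‖z‖} :=
      closure_minimal hx
        (isClosed_le (Continuous.inner continuous_const continuous_id)
          (continuous_const.mul continuous_norm))
    exact hsub hz
  have hnormsq : ‖b‖ ^ 2 = ⟪x, b⟫_ℝ := by
    rw [← real_inner_self_eq_norm_sq]
    have : ⟪b, b⟫_ℝ = ⟪x, b⟫_ℝ - ⟪p, b⟫_ℝ := by
      rw [hb, inner_sub_left]
    have hpb : ⟪p, b⟫_ℝ = 0 := by rw [real_inner_comm]; exact hbp0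
    rw [this, hpb, sub_zero]
  have hble : ‖b‖ ^ 2 ≤ r * ‖b‖ := by
    rw [hnormsq]
    exact hxcl b hbK
  have hbr : ‖b‖ ≤ r := by
    nlinarith [norm_nonneg b]
  exact ⟨p, b, by rw [hb]; abel, fun z hz => hpC z hz, hbr⟩

end ConeDecomp
section Main

open scoped InnerProductSpace

lemma lam_zero {d : ℕ} (F : Matrix (Fin d) (Fin d) ℝ → ℝ) : recessFn F (0 : Matrix (Fin d) (Fin d) ℝ) < ⊤ := by
  have : recessFn F (0 : Matrix (Fin d) (Fin d) ℝ) ≤ ((0:ℝ) : EReal) := by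
    apply recessFn_le_coe
    intro s hs
    rw [qF, smul_zero, sub_self, zero_div]
  exact lt_of_le_of_lt this (EReal.coe_lt_top _)

lemma frobDot_zero_right {d : ℕ} (A : Matrix (Fin d) (Fin d) ℝ) : frobDot A 0 = 0 := by
  rw [frobDot_eq_inner, map_zero, inner_zero_right]

/-- With `Λ = Dom(F_∞)` and `Λ⁰` its polar, the condition
`Dom(F*) ⊆ Λ⁰ + B(0,r)` is equivalent to `F_∞(D) ≤ r |D|` for all `D ∈ Dom(F_∞)`. -/
theorem stmt7 {d : ℕ} (F : Matrix (Fin d) (Fin d) ℝ → ℝ)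
    (hconv : ConvexOn ℝ Set.univ F) (r : ℝ) (hr : 0 < r) :
    ({S : Matrix (Fin d) (Fin d) ℝ | fenchelConj F S < ⊤} ⊆
        {S : Matrix (Fin d) (Fin d) ℝ |
            ∀ D : Matrix (Fin d) (Fin d) ℝ, recessFn F D < ⊤ → frobDot S D ≤ 1}
          + {B : Matrix (Fin d) (Fin d) ℝ | frobNorm B ≤ r})
    ↔ (∀ D : Matrix (Fin d) (Fin d) ℝ, recessFn F D < ⊤ →
        recessFn F D ≤ ((r * frobNorm D : ℝ) : EReal)) := by
  constructor
  · -- forward direction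
    intro hincl D hD
    apply recessFn_le_coe
    intro s hs
    obtain ⟨S, hSsub⟩ := exists_subgradient_matrix F hconv (s • D)
    have hconj : fenchelConj F S < ⊤ := by
      apply conj_lt_top (c := frobDot S (s • D) - F (s • D))
      intro y
      have h1 := hSsub y
      rw [frobDot_sub_right] at h1
      linarith
    have hmem := hincl hconj
    rw [Set.mem_add] at hmem
    obtain ⟨P, hP, Bm, hBm, hSum⟩ := hmem
    have hPD : frobDot P D ≤ 0 := by
      by_contra hpos
      push_neg at hpos
      set t : ℝ := 2 / frobDot P D with ht
      have htpos : 0 < t := div_pos two_pos hpos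
      have h2 := hP (t • D) (lam_smul hconv hD htpos)
      rw [frobDot_smul_right, ht, div_mul_cancel₀ _ (ne_of_gt hpos)] at h2
      linarith
    have hBD : frobDot Bm D ≤ r * frobNorm D :=
      le_trans (frobDot_le_norms Bm D) (mul_le_mul_of_nonneg_right hBm (frobNorm_nonneg D))
    have hSD : frobDot S D ≤ r * frobNorm D := by
      rw [← hSum, frobDot_add_left]
      linarith
    have h0 := hSsub 0
    rw [frobDot_sub_right, frobDot_zero_right, frobDot_smul_right] at h0
    rw [qF, div_le_iff₀ hs]
    have : s * frobDot S D ≤ s * (r * frobNorm D) :=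
      mul_le_mul_of_nonneg_left hSD hs.le
    nlinarith
  · -- backward direction
    intro hyp S hS
    set e := mEquiv d with he
    set K₀ : Set (ESp d) := e '' {D | recessFn F D < ⊤} with hK₀
    have h0 : (0 : ESp d) ∈ K₀ := ⟨0, lam_zero F, map_zero _⟩
    have hadd : ∀ {z w : ESp d}, z ∈ K₀ → w ∈ K₀ → z + w ∈ K₀ := by
      rintro z w ⟨D, hD, rfl⟩ ⟨D', hD', rfl⟩
      exact ⟨D + D', lam_add hconv hD hD', map_add _ _ _⟩
    have hsmul : ∀ {t : ℝ}, 0 < t → ∀ {z : ESp d}, z ∈ K₀ → t • z ∈ K₀ := by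
      rintro t ht z ⟨D, hD, rfl⟩
      exact ⟨t • D, lam_smul hconv hD ht, map_smul _ _ _⟩
    have hx : ∀ z ∈ K₀, ⟪e S, z⟫_ℝ ≤ r * ‖z‖ := by
      rintro z ⟨D, hD, rfl⟩
      rw [← frobDot_eq_inner, ← frobNorm_eq_norm]
      exact inner_le_of_conj_dom hS hD (hyp D hD)
    obtain ⟨p, b, hpb, hpC, hbr⟩ := cone_decomp K₀ h0 hadd hsmul hr.le hx
    rw [Set.mem_add]
    refine ⟨e.symm p, ?_, e.symm b, ?_, ?_⟩
    · intro D hD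
      rw [frobDot_eq_inner]
      have h1 : ⟪p, e D⟫_ℝ ≤ 0 := hpC (e D) ⟨D, hD, rfl⟩
      have h2 : e (e.symm p) = p := e.apply_symm_apply p
      rw [h2]
      linarith
    · show frobNorm (e.symm b) ≤ r
      rw [frobNorm_eq_norm, e.apply_symm_apply]
      exact hbr
    · rw [← map_add, ← hpb, e.symm_apply_apply]

end Main
end

section
/- Let μ : [0,∞) → ℝ be continuously differentiable with μ(Z) > 0 and μ(Z) + 2Zμ'(Z) > 0 for all Z ≥ 0. Then the map D ↦ μ(|D|²)D on symmetric d×d matrices is strictly monotone: (μ(|D₁|²)D₁ − μ(|D₂|²)D₂) : (D₁ − D₂) > 0 whenever D₁ ≠ D₂. -/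
lemma frobDot_expand {d : ℕ} (x y : ℝ) (C E : Matrix (Fin d) (Fin d) ℝ) :
    frobDot (x • C - y • E) (C - E)
      = x * frobDot C C - x * frobDot C E - y * frobDot E C + y * frobDot E E := by
  simp only [frobDot, Matrix.sub_apply, Matrix.smul_apply, smul_eq_mul, Finset.mul_sum,
    ← Finset.sum_sub_distrib, ← Finset.sum_add_distrib]
  exact Finset.sum_congr rfl fun i _ => Finset.sum_congr rfl fun j _ => by ring

lemma frobDot_comm {d : ℕ} (C E : Matrix (Fin d) (Fin d) ℝ) :
    frobDot C E = frobDot E C := by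
  simp [frobDot, mul_comm]

lemma frobDot_nonneg {d : ℕ} (C : Matrix (Fin d) (Fin d) ℝ) : 0 ≤ frobDot C C :=
  Finset.sum_nonneg fun _ _ => Finset.sum_nonneg fun _ _ => mul_self_nonneg _

lemma frobDot_sub_expand {d : ℕ} (C E : Matrix (Fin d) (Fin d) ℝ) :
    frobDot (C - E) (C - E)
      = frobDot C C - frobDot C E - frobDot E C + frobDot E E := by
  simp only [frobDot, Matrix.sub_apply, ← Finset.sum_sub_distrib, ← Finset.sum_add_distrib]
  exact Finset.sum_congr rfl fun i _ => Finset.sum_congr rfl fun j _ => by ring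

lemma frobDot_cs {d : ℕ} (C E : Matrix (Fin d) (Fin d) ℝ) :
    frobDot C E ^ 2 ≤ frobDot C C * frobDot E E := by
  have h : ∀ M N : Matrix (Fin d) (Fin d) ℝ,
      frobDot M N = ∑ p : Fin d × Fin d, M p.1 p.2 * N p.1 p.2 := by
    intro M N; simp [frobDot, Fintype.sum_prod_type]
  rw [h, h, h]
  have := Finset.sum_mul_sq_le_sq_mul_sq Finset.univ
    (fun p : Fin d × Fin d => C p.1 p.2) (fun p => E p.1 p.2)
  simpa [sq] using this

/-- Strict monotonicity of the generalized Newtonian stress `D ↦ μ(|D|²) D`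
under the non-degeneracy conditions `μ(Z) > 0`, `μ(Z) + 2 Z μ'(Z) > 0` for `Z ≥ 0`. -/
theorem stmt9 {d : ℕ} (μ : ℝ → ℝ) (hμ : ContDiff ℝ 1 μ)
    (hpos : ∀ Z : ℝ, 0 ≤ Z → 0 < μ Z)
    (hmono : ∀ Z : ℝ, 0 ≤ Z → 0 < μ Z + 2 * Z * deriv μ Z)
    (D₁ D₂ : Matrix (Fin d) (Fin d) ℝ) (h₁ : D₁.IsSymm) (h₂ : D₂.IsSymm)
    (hne : D₁ ≠ D₂) :
    0 < frobDot (μ (frobDot D₁ D₁) • D₁ - μ (frobDot D₂ D₂) • D₂) (D₁ - D₂) := by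
  set A := frobDot D₁ D₁ with hAdef
  set B := frobDot D₂ D₂ with hBdef
  set P := frobDot D₁ D₂ with hPdef
  have hQ : frobDot D₂ D₁ = P := frobDot_comm _ _
  have hA : (0:ℝ) ≤ A := frobDot_nonneg _
  have hB : (0:ℝ) ≤ B := frobDot_nonneg _
  -- positivity of |D₁ - D₂|²
  have hn : 0 < frobDot (D₁ - D₂) (D₁ - D₂) := by
    obtain ⟨i, j, hij⟩ : ∃ i j, D₁ i j ≠ D₂ i j := by
      by_contra h; push_neg at h; exact hne (Matrix.ext h)
    have hij' : (D₁ - D₂) i j ≠ 0 := by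
      simpa [Matrix.sub_apply, sub_eq_zero] using hij
    apply Finset.sum_pos' (fun k _ => Finset.sum_nonneg fun l _ => mul_self_nonneg _)
    refine ⟨i, Finset.mem_univ i, ?_⟩
    apply Finset.sum_pos' (fun l _ => mul_self_nonneg _)
    exact ⟨j, Finset.mem_univ j, mul_self_pos.2 hij'⟩
  have hnrel : frobDot (D₁ - D₂) (D₁ - D₂) = A - 2 * P + B := by
    rw [frobDot_sub_expand, hQ, ← hAdef, ← hBdef, ← hPdef]; ring
  -- square roots
  set a := Real.sqrt A with hadef
  set b := Real.sqrt B with hbdef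
  have ha0 : (0:ℝ) ≤ a := Real.sqrt_nonneg _
  have hb0 : (0:ℝ) ≤ b := Real.sqrt_nonneg _
  have ha2 : a ^ 2 = A := Real.sq_sqrt hA
  have hb2 : b ^ 2 = B := Real.sq_sqrt hB
  -- Cauchy–Schwarz: P ≤ a * b
  have habP : P ≤ a * b := by
    calc P ≤ |P| := le_abs_self _
      _ = Real.sqrt (P ^ 2) := (Real.sqrt_sq_eq_abs P).symm
      _ ≤ Real.sqrt (A * B) := Real.sqrt_le_sqrt (frobDot_cs D₁ D₂)
      _ = a * b := Real.sqrt_mul hA B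
  -- strict monotonicity of s ↦ μ(s²) s on [0, ∞)
  have hderiv : ∀ s : ℝ, HasDerivAt (fun s => μ (s ^ 2) * s)
      (μ (s ^ 2) + 2 * s ^ 2 * deriv μ (s ^ 2)) s := by
    intro s
    have h1 : HasDerivAt (fun s : ℝ => s ^ 2) (2 * s) s := by
      simpa using hasDerivAt_pow 2 s
    have h2 : HasDerivAt μ (deriv μ (s ^ 2)) (s ^ 2) :=
      (hμ.differentiable one_ne_zero (s ^ 2)).hasDerivAt
    have h3 := HasDerivAt.comp (h := fun t : ℝ => t ^ 2) s h2 h1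
    have h4 := h3.fun_mul (hasDerivAt_id s)
    have : (fun s : ℝ => μ (s ^ 2) * s) = fun y => (μ ∘ fun s : ℝ => s ^ 2) y * id y := rfl
    rw [this]
    exact h4.congr_deriv (by simp [Function.comp]; ring)
  have hsm : StrictMonoOn (fun s => μ (s ^ 2) * s) (Set.Ici (0:ℝ)) := by
    apply strictMonoOn_of_deriv_pos (convex_Ici 0)
    · exact ((hμ.continuous.comp (continuous_pow 2)).mul continuous_id).continuousOn
    · intro s hs
      rw [(hderiv s).deriv]
      exact hmono (s ^ 2) (sq_nonneg s)
  -- expand the goal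
  rw [frobDot_expand, hQ, ← hAdef, ← hBdef, ← hPdef]
  have key : μ A * A - μ A * P - μ B * P + μ B * B
      = (μ (a ^ 2) * a - μ (b ^ 2) * b) * (a - b) + (μ A + μ B) * (a * b - P) := by
    rw [← ha2, ← hb2]; ring
  rw [key]
  rcases eq_or_ne a b with hab | hab
  · have e0 : (μ (a ^ 2) * a - μ (b ^ 2) * b) * (a - b) = 0 := by rw [hab]; ring
    have hAB : A = B := by rw [← ha2, ← hb2, hab]
    have habA : a * b = A := by rw [← ha2, hab]; ring
    have hAP : 0 < a * b - P := by rw [habA]; linarith [hn, hnrel, hAB]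
    have := mul_pos (add_pos (hpos A hA) (hpos B hB)) hAP
    linarith
  · have ht1 : 0 < (μ (a ^ 2) * a - μ (b ^ 2) * b) * (a - b) := by
      rcases hab.lt_or_gt with h | h
      · have hfa := hsm (Set.mem_Ici.2 ha0) (Set.mem_Ici.2 hb0) h
        exact mul_pos_of_neg_of_neg (by simpa using sub_neg.2 hfa) (sub_neg.2 h)
      · have hfb := hsm (Set.mem_Ici.2 hb0) (Set.mem_Ici.2 ha0) h
        exact mul_pos (by simpa using sub_pos.2 hfb) (sub_pos.2 h)
    have ht2 : 0 ≤ (μ A + μ B) * (a * b - P) :=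
      mul_nonneg (le_of_lt (add_pos (hpos A hA) (hpos B hB))) (sub_nonneg.2 habP)
    linarith
end
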